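/- Let U be a uniform ultrafilter. Then the cofinality of the character of U is at least the depth of U: dp(U) ≤ cf(ch(U)). -/

import Mathlib

/-!
Let `θ = cf(ch(U))` and suppose `θ < dp(U)`. A base `B` of size `ch(U)` is the union of `θ` pieces
of size `< ch(U)`. Since `κ < ch(U)`, for each piece `i` some `X i ∈ U` almost-contains no member
of the piece, for otherwise the tails of its members would form a base of size `< ch(U)`. As
`⊆*`-decreasing sequences of length `< dp(U)` have pseudo-intersections in `U`, transfinite
recursion gives a `⊆*`-decreasing `θ`-sequence `D i ⊆ X i` in `U`. Its pseudo-intersection contains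
some `b ∈ B`; if `b` lies in piece `i`, then `b ⊆* D i ⊆ X i`, a contradiction.
-/

open Cardinal

/-- `A ⊆* B` : `A \ B` is bounded. -/
def AlmostSub {K : Type*} [LinearOrder K] (A B : Set K) : Prop := BddAbove (A \ B)

open Set

universe u

theorem WellFoundedLT.exists_seq_of_forall_extend {ι β : Type*} [LT ι] [WellFoundedLT ι]
    [Nonempty β] (P : ι → β → Prop) (R : β → β → Prop)
    (h : ∀ i (g : ι → β), (∀ j < i, P j (g j) ∧ ∀ k < j, R (g k) (g j)) →
      ∃ b, P i b ∧ ∀ j < i, R (g j) b) :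
    ∃ f : ι → β, ∀ i, P i (f i) ∧ ∀ j < i, R (f j) (f i) := by
  classical
  let F : ∀ i, (∀ j, j < i → β) → β := fun i rec =>
    if hb : ∃ b, P i b ∧ ∀ j (hj : j < i), R (rec j hj) b then hb.choose
    else Classical.arbitrary β
  let f := wellFounded_lt.fix F
  refine ⟨f, fun i => ?_⟩
  induction i using WellFoundedLT.induction with
  | ind i IH =>
    have hb := h i f IH
    rw [show f i = F i (fun j _ => f j) from wellFounded_lt.fix_eq F i]
    simp only [F, dif_pos hb]
    exact hb.choose_spec

namespace AlmostSub

variable {α : Type*} [LinearOrder α] {A B C : Set α}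

theorem of_subset [Nonempty α] (h : A ⊆ B) : AlmostSub A B := by
  simp [AlmostSub, sdiff_eq_empty.2 h]

theorem trans (hAB : AlmostSub A B) (hBC : AlmostSub B C) : AlmostSub A C :=
  (hAB.union hBC).mono fun x hx => by by_cases hB : x ∈ B <;> simp_all

theorem exists_inter_Ioi_subset (h : AlmostSub A B) : ∃ c, A ∩ Ioi c ⊆ B := by
  obtain ⟨c, hc⟩ := h
  exact ⟨c, fun x ⟨hA, hx⟩ => by_contra fun hB => (hc ⟨hA, hB⟩).not_gt hx⟩

end AlmostSub

theorem Cardinal.le_mk_sdiff_of_mk_lt {α : Type u} {κ : Cardinal.{u}} (hκ : ℵ₀ ≤ κ) {S T : Set α}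
    (hS : κ ≤ #S) (hT : #T < κ) : κ ≤ #(S \ T : Set α) := by
  by_contra! h
  exact (hS.trans (le_mk_sdiff_add_mk S T)).not_gt (add_lt_of_lt hκ h hT)

theorem Cardinal.mk_Iic_ord_toType_lt {κ : Cardinal} (hκ : ℵ₀ ≤ κ) (c : κ.ord.ToType) :
    #(Iic c) < κ := by
  rw [← Iio_insert]
  exact mk_insert_le.trans_lt
    (add_lt_of_lt hκ (by simpa using mk_Iio_lt c) (one_lt_aleph0.trans_le hκ))

theorem Cardinal.exists_cover_mk_lt_ord_cof {β : Type u} (hβ : ℵ₀ ≤ #β) :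
    ∃ A : (#β).ord.cof.ord.ToType → Set β, (∀ i, #(A i) < #β) ∧ ∀ x, ∃ i, x ∈ A i := by
  obtain ⟨e⟩ : Nonempty (β ≃ (#β).ord.ToType) := Cardinal.eq.1 (mk_ord_toType _).symm
  obtain ⟨S, hS, hScard⟩ := Order.exists_cof_eq (#β).ord.ToType
  rw [Ordinal.cof_toType] at hScard
  obtain ⟨g⟩ : Nonempty ((#β).ord.cof.ord.ToType ≃ S) := Cardinal.eq.1 (by simp [hScard])
  refine ⟨fun i => e ⁻¹' Iic (g i), fun i => ?_, fun x => ?_⟩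
  · rw [mk_preimage_equiv]
    exact mk_Iic_ord_toType_lt hβ _
  · obtain ⟨y, hy, hxy⟩ := hS (e x)
    exact ⟨g.symm ⟨y, hy⟩, by simpa using hxy⟩

namespace Ultrafilter

variable {α : Type u} {U : Ultrafilter α} {κ : Cardinal.{u}}

theorem compl_mem_of_mk_lt (hU : ∀ X ∈ U, κ ≤ #X) {s : Set α} (hs : #s < κ) : sᶜ ∈ U :=
  compl_mem_iff_notMem.2 fun h => (hU s h).not_gt hs

theorem Ioi_mem_of_forall_le_mk {U : Ultrafilter κ.ord.ToType} (hκ : ℵ₀ ≤ κ)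
    (hU : ∀ X ∈ U, κ ≤ #X) (c : κ.ord.ToType) : Ioi c ∈ U := by
  simpa using compl_mem_of_mk_lt hU (mk_Iic_ord_toType_lt hκ c)

end Ultrafilter

section PseudoIntersection

variable {α : Type u} [LinearOrder α] {ι : Type*}

def AlmostAntitone [LT ι] (E : ι → Set α) : Prop :=
  ∀ ⦃i j⦄, i < j → AlmostSub (E j) (E i)

def IsPseudoIntersection (P : Set α) (E : ι → Set α) : Prop :=
  ∀ i, AlmostSub P (E i)

def HasPseudoIntersectionsBelow (F : Filter α) (d : Cardinal.{u}) : Prop :=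
  ∀ μ : Cardinal.{u}, μ.IsRegular → μ < d → ∀ E : μ.ord.ToType → Set α, (∀ i, E i ∈ F) →
    AlmostAntitone E → ∃ P ∈ F, IsPseudoIntersection P E

theorem AlmostAntitone.almostSub_of_le [Nonempty α] [PartialOrder ι] {E : ι → Set α}
    (hE : AlmostAntitone E) {i j : ι} (hij : i ≤ j) : AlmostSub (E j) (E i) := by
  rcases hij.lt_or_eq with h | rfl
  · exact hE h
  · exact .of_subset subset_rfl

theorem AlmostAntitone.isPseudoIntersection_of_isCofinal [Nonempty α] [PartialOrder ι]
    {E : ι → Set α} (hE : AlmostAntitone E) {s : Set ι} (hs : IsCofinal s) {P : Set α}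
    (hP : ∀ j ∈ s, AlmostSub P (E j)) : IsPseudoIntersection P E := fun i => by
  obtain ⟨j, hj, hij⟩ := hs i
  exact (hP j hj).trans (hE.almostSub_of_le hij)

theorem HasPseudoIntersectionsBelow.exists_of_mk_lt [Nonempty α] {F : Filter α} {d : Cardinal.{u}}
    (hd : HasPseudoIntersectionsBelow F d) {ι : Type u} [LinearOrder ι] [WellFoundedLT ι]
    (hι : #ι < d) {E : ι → Set α} (hEF : ∀ i, E i ∈ F) (hE : AlmostAntitone E) :
    ∃ P ∈ F, IsPseudoIntersection P E := by
  rcases isEmpty_or_nonempty ι with hι₀ | hι₀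
  · exact ⟨univ, Filter.univ_mem, isEmptyElim⟩
  by_cases hcof : ℵ₀ ≤ Order.cof ι
  · obtain ⟨s, hs, hstype⟩ := Ordinal.exists_ord_cof_eq ι
    rw [← Ordinal.type_toType (Order.cof ι).ord] at hstype
    let e := OrderIso.ofRelIsoLT (Ordinal.type_eq.1 hstype).some
    have hreg : (Order.cof ι).IsRegular := ⟨hcof, (Order.cof_ord_cof ι).ge⟩
    obtain ⟨P, hPF, hP⟩ := hd _ hreg ((Order.cof_le_cardinalMk ι).trans_lt hι)
      (fun k => E (e.symm k)) (fun k => hEF _) fun k l hkl => hE (e.symm.strictMono hkl)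
    refine ⟨P, hPF, hE.isPseudoIntersection_of_isCofinal hs fun j hj => ?_⟩
    simpa using hP (e ⟨j, hj⟩)
  · obtain ⟨m, hm⟩ := (Order.cof_le_one_iff.1 (Order.cof_lt_aleph0_iff.1 (not_le.1 hcof)))
    exact ⟨E m, hEF m, hE.isPseudoIntersection_of_isCofinal (isCofinal_singleton_iff.2 hm)
      fun j hj => .of_subset (by rw [mem_singleton_iff.1 hj])⟩

theorem HasPseudoIntersectionsBelow.exists_almostAntitone_subset [Nonempty α] {F : Filter α}
    {d : Cardinal.{u}} (hd : HasPseudoIntersectionsBelow F d) {ι : Type u} [LinearOrder ι]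
    [WellFoundedLT ι] (hι : ∀ i : ι, #(Iio i) < d) (X : ι → Set α) (hX : ∀ i, X i ∈ F) :
    ∃ D : ι → Set α, (∀ i, D i ∈ F ∧ D i ⊆ X i) ∧ AlmostAntitone D := by
  obtain ⟨D, hD⟩ := WellFoundedLT.exists_seq_of_forall_extend
    (fun i D => D ∈ F ∧ D ⊆ X i) (fun D' D => AlmostSub D D') fun i g hg => by
      obtain ⟨Q, hQF, hQ⟩ := hd.exists_of_mk_lt (hι i) (E := fun j : Iio i => g j)
        (fun j => (hg j j.2).1.1) fun j k hjk => (hg k k.2).2 j hjk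
      exact ⟨Q ∩ X i, ⟨Filter.inter_mem hQF (hX i), inter_subset_right⟩,
        fun j hj => (AlmostSub.of_subset inter_subset_left).trans (hQ ⟨j, hj⟩)⟩
  exact ⟨D, fun i => (hD i).1, fun i j hij => (hD j).2 i hij⟩

end PseudoIntersection

section Base

variable {α : Type u}

def IsFilterBase (F : Filter α) (B : Set (Set α)) : Prop :=
  (∀ b ∈ B, b ∈ F) ∧ ∀ X ∈ F, ∃ b ∈ B, b ⊆ X

theorem exists_forall_not_almostSub_of_mk_lt [LinearOrder α] {F : Filter α}
    (htail : ∀ c, Ioi c ∈ F) {ch : Cardinal.{u}} (hch : ∀ B, IsFilterBase F B → ch ≤ #B)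
    {S : Set (Set α)} (hSF : ∀ s ∈ S, s ∈ F) (hS : #S * #α < ch) :
    ∃ X ∈ F, ∀ s ∈ S, ¬ AlmostSub s X := by
  by_contra! h
  refine (hch (range fun p : S × α => p.1.1 ∩ Ioi p.2) ⟨?_, fun X hX => ?_⟩).not_gt ?_
  · rintro _ ⟨p, rfl⟩
    exact Filter.inter_mem (hSF _ p.1.2) (htail p.2)
  · obtain ⟨s, hs, hsX⟩ := h X hX
    obtain ⟨c, hc⟩ := hsX.exists_inter_Ioi_subset
    exact ⟨_, ⟨(⟨s, hs⟩, c), rfl⟩, hc⟩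
  · exact mk_range_le.trans_lt (by simpa using hS)

-- Along an enumeration `e` of a base of size `≤ κ`, pick by recursion fresh distinct points
-- `x i, y i ∈ e i`; then neither `{x i}` nor its complement contains any `e i`.
theorem lt_mk_of_isFilterBase {U : Ultrafilter α} {κ : Cardinal.{u}} (hκ : ℵ₀ ≤ κ)
    (hU : ∀ X ∈ U, κ ≤ #X) {B : Set (Set α)} (hB : IsFilterBase U B) : κ < #B := by
  by_contra! hBκ
  obtain ⟨b₀, hb₀, -⟩ := hB.2 univ Filter.univ_mem
  have : Nonempty B := ⟨⟨b₀, hb₀⟩⟩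
  obtain ⟨j⟩ : Nonempty (B ↪ κ.ord.ToType) := by rwa [← le_def, mk_ord_toType]
  set e : κ.ord.ToType → B := Function.invFun j
  have : Nonempty α := Filter.nonempty_of_neBot (U : Filter α)
  obtain ⟨p, hp⟩ := WellFoundedLT.exists_seq_of_forall_extend
    (fun i (p : α × α) => p.1 ∈ (e i : Set α) ∧ p.2 ∈ (e i : Set α) ∧ p.1 ≠ p.2)
    (fun q p : α × α => p.1 ≠ q.1 ∧ p.1 ≠ q.2 ∧ p.2 ≠ q.1 ∧ p.2 ≠ q.2) fun i g _ => by
      set V := (Prod.fst ∘ g) '' Iio i ∪ (Prod.snd ∘ g) '' Iio i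
      have hV : #V < κ := (mk_union_le _ _).trans_lt <| add_lt_of_lt hκ
        (mk_image_le.trans_lt (by simpa using mk_Iio_lt i))
        (mk_image_le.trans_lt (by simpa using mk_Iio_lt i))
      have h2 : 2 ≤ #((e i : Set α) \ V : Set α) := (natCast_lt_aleph0 (n := 2)).le.trans <|
        hκ.trans (le_mk_sdiff_of_mk_lt hκ (hU _ (hB.1 _ (e i).2)) hV)
      obtain ⟨⟨x, hx, hxV⟩, ⟨y, hy, hyV⟩, hxy⟩ := two_le_iff.1 h2
      refine ⟨(x, y), ⟨hx, hy, fun h => hxy (Subtype.ext h)⟩, fun k hk => ?_⟩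
      refine ⟨?_, ?_, ?_, ?_⟩ <;> rintro rfl
      exacts [hxV (.inl ⟨k, hk, rfl⟩), hxV (.inr ⟨k, hk, rfl⟩),
        hyV (.inl ⟨k, hk, rfl⟩), hyV (.inr ⟨k, hk, rfl⟩)]
  set A := range fun i => (p i).1
  have hyA : ∀ i, (p i).2 ∉ A := by
    rintro i ⟨k, hk⟩
    rcases lt_trichotomy k i with h | rfl | h
    · exact (hp i).2 k h |>.2.2.1 hk.symm
    · exact (hp k).1.2.2 hk
    · exact (hp k).2 i h |>.2.1 hk
  have he : ∀ b ∈ B, ∃ i, (e i : Set α) = b := fun b hb =>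
    ⟨j ⟨b, hb⟩, by simp [e, Function.leftInverse_invFun j.injective _]⟩
  rcases U.mem_or_compl_mem A with hA | hA
  · obtain ⟨b, hb, hbA⟩ := hB.2 A hA
    obtain ⟨i, rfl⟩ := he b hb
    exact hyA i (hbA (hp i).1.2.1)
  · obtain ⟨b, hb, hbA⟩ := hB.2 _ hA
    obtain ⟨i, rfl⟩ := he b hb
    exact hbA (hp i).1.1 ⟨i, rfl⟩

end Base

/-- for a uniform ultrafilter `U`, `dp(U) ≤ cf(ch(U))`. -/
theorem stmt_14 (kappa : Cardinal) (hkappa : Cardinal.aleph0 ≤ kappa)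
    (U : Ultrafilter kappa.ord.ToType)
    (huniform : ∀ X ∈ U, #X = kappa)
    (ch dp : Cardinal)
    (hch : IsLeast {c : Cardinal | ∃ B : Set (Set kappa.ord.ToType),
      (∀ b ∈ B, b ∈ U) ∧ (∀ X ∈ U, ∃ b ∈ B, b ⊆ X) ∧ #B = c} ch)
    (hdp : IsLeast {theta : Cardinal | theta.IsRegular ∧
      ∃ B : theta.ord.ToType → Set kappa.ord.ToType, (∀ i, B i ∈ U) ∧
        (∀ i j : theta.ord.ToType, i < j → AlmostSub (B j) (B i)) ∧
        ¬ ∃ P ∈ U, ∀ i, AlmostSub P (B i)} dp) :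
    dp ≤ ch.ord.cof := by
  have hU : ∀ X ∈ U, kappa ≤ #X := fun X hX => (huniform X hX).ge
  have : Nonempty kappa.ord.ToType := Filter.nonempty_of_neBot (U : Filter _)
  obtain ⟨B, hBU, hBbase, rfl⟩ := hch.1
  have hBmin : ∀ B', IsFilterBase U B' → #B ≤ #B' := fun B' hB' => hch.2 ⟨B', hB'.1, hB'.2, rfl⟩
  have hkappaB : kappa < #B := lt_mk_of_isFilterBase hkappa hU ⟨hBU, hBbase⟩
  have hBinf : ℵ₀ ≤ #B := hkappa.trans hkappaB.le
  have hpi : HasPseudoIntersectionsBelow (U : Filter _) dp := fun μ hμ hμdp E hE hanti =>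
    by_contra fun h => hμdp.not_ge (hdp.2 ⟨hμ, E, hE, hanti, h⟩)
  by_contra! hcof
  obtain ⟨A, hAcard, hAcover⟩ := exists_cover_mk_lt_ord_cof hBinf
  choose X hXU hX using fun i => exists_forall_not_almostSub_of_mk_lt
    (Ultrafilter.Ioi_mem_of_forall_le_mk hkappa hU) hBmin (S := Subtype.val '' A i)
    (by rintro _ ⟨b, -, rfl⟩; exact hBU b b.2)
    (mul_lt_of_lt hBinf (mk_image_le.trans_lt (hAcard i)) (by simpa using hkappaB))
  obtain ⟨D, hD, hDanti⟩ := hpi.exists_almostAntitone_subset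
    (fun i => (by simpa using mk_Iio_lt i : _ < _).trans hcof) X hXU
  obtain ⟨P, hPU, hP⟩ := hpi _ (isRegular_cof (isSuccLimit_ord hBinf)) hcof D
    (fun i => (hD i).1) hDanti
  obtain ⟨b, hb, hbP⟩ := hBbase P hPU
  obtain ⟨i, hi⟩ := hAcover ⟨b, hb⟩
  exact hX i b ⟨_, hi, rfl⟩ (((AlmostSub.of_subset hbP).trans (hP i)).trans (.of_subset (hD i).2))
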